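/- Let ν > 1 and let X be a random variable taking values in ℕ = {1,2,3,...}. Then X follows the DPareto(ν) distribution if and only if for every s ∈ (0,1): E[ s^{X-1} - 1 + (X/(X+1))^ν · (1 - s^X) ] = 0. -/

import Mathlib

open MeasureTheory Real Filter Set Topology

noncomputable def zetaR (ν : ℝ) : ℝ := ∑' k : ℕ, ((k : ℝ) + 1) ^ (-ν)

noncomputable def dpPMF (ν : ℝ) (k : ℕ) : ℝ := (k : ℝ) ^ (-ν) / zetaR ν

noncomputable def g (ν : ℝ) (x : ℕ) (s : ℝ) : ℝ :=
  s ^ (x - 1) - 1 + ((x : ℝ) / ((x : ℝ) + 1)) ^ ν * (1 - s ^ x)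

noncomputable def hker (ν : ℝ) (x y : ℕ) : ℝ :=
  ∫ s in (0:ℝ)..1, g ν x s * g ν y s

def IsDPareto {Ω : Type*} [MeasurableSpace Ω] (P : Measure Ω) (X : Ω → ℕ) (ν : ℝ) : Prop :=
  ∀ k : ℕ, 1 ≤ k → P (X ⁻¹' {k}) = ENNReal.ofReal (dpPMF ν k)

/-- the ratio factor -/
noncomputable def rr (ν : ℝ) (k : ℕ) : ℝ := ((k : ℝ) / ((k : ℝ) + 1)) ^ ν

lemma summable_shift1 {ν : ℝ} (hν : 1 < ν) :
    Summable (fun k : ℕ => ((k : ℝ) + 1) ^ (-ν)) := by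
  have h := Real.summable_nat_rpow.2 (by linarith : -ν < -1)
  have h2 := (summable_nat_add_iff 1).2 h
  refine h2.congr fun k => ?_
  push_cast
  ring_nf

lemma summable_shift2 {ν : ℝ} (hν : 1 < ν) :
    Summable (fun k : ℕ => ((k : ℝ) + 2) ^ (-ν)) := by
  have h2 := (summable_nat_add_iff 1).2 (summable_shift1 hν)
  refine h2.congr fun k => ?_
  push_cast
  ring_nf

lemma zetaR_pos {ν : ℝ} (hν : 1 < ν) : 0 < zetaR ν := by
  have hs := summable_shift1 hν
  refine Summable.tsum_pos hs (fun k => Real.rpow_nonneg (by positivity) _) 0 ?_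
  norm_num

lemma zetaR_split {ν : ℝ} (hν : 1 < ν) :
    zetaR ν = 1 + ∑' k : ℕ, ((k : ℝ) + 2) ^ (-ν) := by
  have hs := summable_shift1 hν
  rw [zetaR, Summable.tsum_eq_zero_add hs]
  norm_num
  exact tsum_congr fun k => by push_cast; ring_nf

lemma rr_nonneg (ν : ℝ) (k : ℕ) : 0 ≤ rr ν k := Real.rpow_nonneg (by positivity) _

lemma rr_le_one {ν : ℝ} (hν : 1 < ν) (k : ℕ) : rr ν k ≤ 1 := by
  apply Real.rpow_le_one (by positivity) _ (by linarith)
  rw [div_le_one (by positivity)]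
  linarith

lemma rr_key {ν : ℝ} (k : ℕ) :
    ((k : ℝ) + 1) ^ (-ν) * rr ν (k + 1) = ((k : ℝ) + 2) ^ (-ν) := by
  have h1 : (0:ℝ) < (k : ℝ) + 1 := by positivity
  have h2 : (0:ℝ) < (k : ℝ) + 2 := by positivity
  rw [rr]
  push_cast
  rw [Real.div_rpow (by positivity) (by positivity), Real.rpow_neg h1.le,
    Real.rpow_neg h2.le]
  have h3 : ((k : ℝ) + 1) ^ ν ≠ 0 := by positivity
  field_simp
  ring_nf

lemma g_expand (ν : ℝ) (k : ℕ) (s : ℝ) :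
    g ν (k + 1) s = s ^ k - 1 + rr ν (k + 1) * (1 - s ^ (k + 1)) := by
  rw [g, rr]
  norm_num

lemma pow_mem_Ioc {s : ℝ} (hs : s ∈ Set.Ioo (0:ℝ) 1) (n : ℕ) : s ^ n ∈ Set.Ioc (0:ℝ) 1 :=
  ⟨pow_pos hs.1 n, pow_le_one₀ hs.1.le hs.2.le⟩

lemma g_bound {ν : ℝ} (hν : 1 < ν) {s : ℝ} (hs : s ∈ Set.Ioo (0:ℝ) 1) (k : ℕ) :
    |g ν k s| ≤ 2 := by
  have h1 := pow_mem_Ioc hs (k - 1)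
  have h2 := pow_mem_Ioc hs k
  have h3 := rr_nonneg ν k
  have h4 := rr_le_one hν k
  rw [g]
  have hb1 : |s ^ (k - 1) - 1| ≤ 1 := by
    rw [abs_le]; constructor <;> [linarith [h1.1]; linarith [h1.2]]
  have hb2 : |((k : ℝ) / ((k : ℝ) + 1)) ^ ν * (1 - s ^ k)| ≤ 1 := by
    rw [abs_mul]
    have : |((k : ℝ) / ((k : ℝ) + 1)) ^ ν| ≤ 1 := by
      rw [show ((k : ℝ) / ((k : ℝ) + 1)) ^ ν = rr ν k from rfl, abs_of_nonneg h3]; exact h4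
    have h5 : |1 - s ^ k| ≤ 1 := by
      rw [abs_le]; constructor <;> [linarith [h2.2]; linarith [h2.1]]
    calc |((k : ℝ) / ((k : ℝ) + 1)) ^ ν| * |1 - s ^ k| ≤ 1 * 1 :=
          mul_le_mul this h5 (abs_nonneg _) zero_le_one
      _ = 1 := by norm_num
  calc |s ^ (k - 1) - 1 + ((k : ℝ) / ((k : ℝ) + 1)) ^ ν * (1 - s ^ k)|
      ≤ |s ^ (k - 1) - 1| + |((k : ℝ) / ((k : ℝ) + 1)) ^ ν * (1 - s ^ k)| := abs_add_le _ _
    _ ≤ 2 := by linarith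

lemma summable_dom {f h : ℕ → ℝ} (hh : Summable h) (hb : ∀ n, |f n| ≤ h n) : Summable f :=
  (Summable.of_nonneg_of_le (fun n => abs_nonneg _) hb hh).of_abs

lemma summable_coeff_pow {d : ℕ → ℝ} {M s : ℝ} (hb : ∀ m, |d m| ≤ M)
    (hs : s ∈ Set.Ioo (0:ℝ) 1) : Summable (fun m => d m * s ^ m) := by
  refine summable_dom ((summable_geometric_of_lt_one hs.1.le hs.2).mul_left M) fun n => ?_
  rw [abs_mul, abs_pow, abs_of_pos hs.1]
  exact mul_le_mul_of_nonneg_right (hb n) (pow_nonneg hs.1.le _)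

lemma coeff_eq_zero {d : ℕ → ℝ} {M : ℝ} (hb : ∀ m, |d m| ≤ M)
    (h : ∀ s ∈ Set.Ioo (0:ℝ) 1, ∑' m, d m * s ^ m = 0) : ∀ m, d m = 0 := by
  intro m
  induction m using Nat.strong_induction_on with
  | _ m IH =>
  have hM : 0 ≤ M := le_trans (abs_nonneg _) (hb 0)
  have key : ∀ s ∈ Set.Ioo (0:ℝ) 1, |d m| ≤ M * s / (1 - s) := by
    intro s hs
    have hsum := summable_coeff_pow hb hs
    have htail : ∑' i, d (i + m) * s ^ (i + m) = 0 := by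
      have h1 := Summable.sum_add_tsum_nat_add m hsum
      rw [h s hs] at h1
      have h2 : ∑ i ∈ Finset.range m, d i * s ^ i = 0 :=
        Finset.sum_eq_zero fun i hi => by
          rw [IH i (Finset.mem_range.1 hi)]; ring
      linarith [h1]
    have hsum2 : Summable (fun i => d (i + m) * s ^ i) := by
      refine summable_dom ((summable_geometric_of_lt_one hs.1.le hs.2).mul_left M) fun n => ?_
      rw [abs_mul, abs_pow, abs_of_pos hs.1]
      exact mul_le_mul_of_nonneg_right (hb _) (pow_nonneg hs.1.le _)
    have hfac : ∑' i, d (i + m) * s ^ (i + m) = s ^ m * ∑' i, d (i + m) * s ^ i := by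
      rw [← tsum_mul_left]
      exact tsum_congr fun i => by rw [pow_add]; ring
    have hT : ∑' i, d (i + m) * s ^ i = 0 := by
      rw [hfac] at htail
      have := pow_ne_zero m (ne_of_gt hs.1)
      exact (mul_eq_zero.1 htail).resolve_left this
    have hzero := Summable.tsum_eq_zero_add hsum2
    rw [hT] at hzero
    have hdm : d m = - ∑' i, d (i + 1 + m) * s ^ (i + 1) := by
      have : d (0 + m) * s ^ 0 = d m := by norm_num
      rw [this] at hzero
      linarith [hzero]
    rw [hdm, abs_neg]
    have hsum3 : Summable (fun i : ℕ => M * s ^ (i + 1)) := by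
      have := ((summable_geometric_of_lt_one hs.1.le hs.2).mul_left (M * s))
      exact this.congr fun i => by rw [pow_succ]; ring
    have habs : Summable (fun i : ℕ => |d (i + 1 + m) * s ^ (i + 1)|) := by
      refine Summable.of_nonneg_of_le (fun n => abs_nonneg _) (fun n => ?_) hsum3
      rw [abs_mul, abs_pow, abs_of_pos hs.1]
      exact mul_le_mul_of_nonneg_right (hb _) (pow_nonneg hs.1.le _)
    calc |∑' i, d (i + 1 + m) * s ^ (i + 1)|
        ≤ ∑' i, |d (i + 1 + m) * s ^ (i + 1)| := by
            have hnorm := norm_tsum_le_tsum_norm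
              (f := fun i : ℕ => d (i + 1 + m) * s ^ (i + 1))
              (by simpa only [Real.norm_eq_abs] using habs)
            simpa only [Real.norm_eq_abs] using hnorm
      _ ≤ ∑' i : ℕ, M * s ^ (i + 1) := Summable.tsum_le_tsum (fun i => by
            rw [abs_mul, abs_pow, abs_of_pos hs.1]
            exact mul_le_mul_of_nonneg_right (hb _) (pow_nonneg hs.1.le _)) habs hsum3
      _ = M * s / (1 - s) := by
          rw [tsum_mul_left]
          rw [show (fun i : ℕ => s ^ (i + 1)) = fun i : ℕ => s * s ^ i from
            funext fun i => by rw [pow_succ]; ring]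
          rw [tsum_mul_left, tsum_geometric_of_lt_one hs.1.le hs.2]
          field_simp
  have hle : |d m| ≤ 0 := by
    have hev : ∀ᶠ s in 𝓝[>] (0:ℝ), |d m| ≤ M * s / (1 - s) := by
      filter_upwards [Ioo_mem_nhdsGT_of_mem (by norm_num : (0:ℝ) ∈ Set.Ico (0:ℝ) 1)]
        with s hs using key s hs
    have htend : Tendsto (fun s : ℝ => M * s / (1 - s)) (𝓝[>] (0:ℝ)) (𝓝 0) := by
      have : ContinuousAt (fun s : ℝ => M * s / (1 - s)) 0 := by
        apply ContinuousAt.div (by fun_prop) (by fun_prop)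
        norm_num
      have h2 := this.tendsto.mono_left (nhdsWithin_le_nhds : 𝓝[>] (0:ℝ) ≤ 𝓝 0)
      simpa using h2
    exact ge_of_tendsto htend hev
  exact abs_eq_zero.1 (le_antisymm hle (abs_nonneg _))

noncomputable def coef (ν : ℝ) (p : ℕ → ℝ) : ℕ → ℝ
  | 0 => p 1 - 1 + ∑' k, p (k + 1) * rr ν (k + 1)
  | (m + 1) => p (m + 2) - p (m + 1) * rr ν (m + 1)

section core

variable {ν : ℝ} {p : ℕ → ℝ} {s : ℝ}

lemma abs_mul_le {a c : ℝ} (ha : 0 ≤ a) (hc : |c| ≤ 1) : |a * c| ≤ a := by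
  rw [abs_mul, abs_of_nonneg ha]
  exact mul_le_of_le_one_right ha hc

lemma rr_abs_le_one (hν : 1 < ν) (k : ℕ) : |rr ν k| ≤ 1 := by
  rw [abs_of_nonneg (rr_nonneg ν k)]; exact rr_le_one hν k

lemma spow_abs_le_one (hs : s ∈ Set.Ioo (0:ℝ) 1) (n : ℕ) : |s ^ n| ≤ 1 := by
  rw [abs_of_pos (pow_pos hs.1 n)]
  exact (pow_mem_Ioc hs n).2

lemma summable_S1 (hν : 1 < ν) (hnn : ∀ k, 0 ≤ p k) (hsum : Summable p)
    (hs : s ∈ Set.Ioo (0:ℝ) 1) : Summable (fun k => p (k + 1) * s ^ k) :=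
  summable_dom ((summable_nat_add_iff 1).2 hsum)
    (fun k => abs_mul_le (hnn _) (spow_abs_le_one hs k))

lemma summable_S3 (hν : 1 < ν) (hnn : ∀ k, 0 ≤ p k) (hsum : Summable p) :
    Summable (fun k => p (k + 1) * rr ν (k + 1)) :=
  summable_dom ((summable_nat_add_iff 1).2 hsum)
    (fun k => abs_mul_le (hnn _) (rr_abs_le_one hν _))

lemma summable_S4 (hν : 1 < ν) (hnn : ∀ k, 0 ≤ p k) (hsum : Summable p)
    (hs : s ∈ Set.Ioo (0:ℝ) 1) :
    Summable (fun k => p (k + 1) * (rr ν (k + 1) * s ^ (k + 1))) :=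
  summable_dom ((summable_nat_add_iff 1).2 hsum)
    (fun k => abs_mul_le (hnn _) (by
      rw [abs_mul]
      exact mul_le_one₀ (rr_abs_le_one hν _) (abs_nonneg _) (spow_abs_le_one hs _)))

lemma summable_S1' (hν : 1 < ν) (hnn : ∀ k, 0 ≤ p k) (hsum : Summable p)
    (hs : s ∈ Set.Ioo (0:ℝ) 1) : Summable (fun k => p (k + 2) * s ^ (k + 1)) :=
  summable_dom ((summable_nat_add_iff 2).2 hsum)
    (fun k => abs_mul_le (hnn _) (spow_abs_le_one hs _))

lemma summable_G (hν : 1 < ν) (hnn : ∀ k, 0 ≤ p k) (hsum : Summable p)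
    (hs : s ∈ Set.Ioo (0:ℝ) 1) : Summable (fun k => p k * g ν k s) :=
  summable_dom (hsum.mul_left 2) (fun k => by
    rw [abs_mul, abs_of_nonneg (hnn k)]
    calc p k * |g ν k s| ≤ p k * 2 := by
          exact mul_le_mul_of_nonneg_left (g_bound hν hs k) (hnn k)
      _ = 2 * p k := by ring)

lemma rearrange (hν : 1 < ν) (hp0 : p 0 = 0) (hnn : ∀ k, 0 ≤ p k)
    (hsum : Summable p) (htot : ∑' k, p k = 1) (hs : s ∈ Set.Ioo (0:ℝ) 1) :
    ∑' k, p k * g ν k s = ∑' m, coef ν p m * s ^ m := by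
  have hs1 : Summable (fun k => p (k + 1)) := (summable_nat_add_iff 1).2 hsum
  have hS1 := summable_S1 hν hnn hsum hs
  have hS3 := summable_S3 hν hnn hsum
  have hS4 := summable_S4 hν hnn hsum hs
  have hS1' := summable_S1' hν hnn hsum hs
  have htot' : ∑' k, p (k + 1) = 1 := by
    have h := Summable.tsum_eq_zero_add hsum
    rw [htot, hp0] at h
    linarith
  have hC1 : Summable (fun m => coef ν p (m + 1) * s ^ (m + 1)) := by
    refine (hS1'.sub hS4).congr fun m => ?_
    show p (m + 2) * s ^ (m + 1) - p (m + 1) * (rr ν (m + 1) * s ^ (m + 1)) = _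
    rw [show coef ν p (m + 1) = p (m + 2) - p (m + 1) * rr ν (m + 1) from rfl]
    ring
  have hC : Summable (fun m => coef ν p m * s ^ m) := (summable_nat_add_iff 1).1 hC1
  have e1 : ∑' k, p k * g ν k s = ∑' k, p (k + 1) * g ν (k + 1) s := by
    rw [Summable.tsum_eq_zero_add (summable_G hν hnn hsum hs), hp0, zero_mul, zero_add]
  have e3 : ∑' k, p (k + 1) * g ν (k + 1) s =
      ((∑' k, p (k + 1) * s ^ k) - ∑' k, p (k + 1)) +
      ((∑' k, p (k + 1) * rr ν (k + 1)) -
        ∑' k, p (k + 1) * (rr ν (k + 1) * s ^ (k + 1))) := by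
    rw [← Summable.tsum_sub hS1 hs1, ← Summable.tsum_sub hS3 hS4, ← Summable.tsum_add (hS1.sub hs1) (hS3.sub hS4)]
    exact tsum_congr fun k => by rw [g_expand]; ring
  have e4 : ∑' k, p (k + 1) * s ^ k = p 1 + ∑' k, p (k + 2) * s ^ (k + 1) := by
    rw [Summable.tsum_eq_zero_add hS1, pow_zero, mul_one]
  have e5 : ∑' m, coef ν p m * s ^ m =
      (p 1 - 1 + ∑' k, p (k + 1) * rr ν (k + 1)) +
      ((∑' k, p (k + 2) * s ^ (k + 1)) -
        ∑' k, p (k + 1) * (rr ν (k + 1) * s ^ (k + 1))) := by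
    have htail : ∑' (b : ℕ), coef ν p (b + 1) * s ^ (b + 1) =
        (∑' k, p (k + 2) * s ^ (k + 1)) -
          ∑' k, p (k + 1) * (rr ν (k + 1) * s ^ (k + 1)) := by
      rw [← Summable.tsum_sub hS1' hS4]
      exact tsum_congr fun m => by
        rw [show coef ν p (m + 1) = p (m + 2) - p (m + 1) * rr ν (m + 1) from rfl]
        ring
    rw [Summable.tsum_eq_zero_add hC, pow_zero, mul_one, htail]
    rfl
  rw [e1, e3, e4, e5, htot']
  ring

lemma coef_bound (hν : 1 < ν) (hp0 : p 0 = 0) (hnn : ∀ k, 0 ≤ p k)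
    (hsum : Summable p) (htot : ∑' k, p k = 1) : ∀ m, |coef ν p m| ≤ 3 := by
  have hple : ∀ k, p k ≤ 1 := fun k =>
    htot ▸ Summable.le_tsum hsum k (fun i _ => hnn i)
  have hS3 := summable_S3 hν hnn hsum
  have hs1 : Summable (fun k => p (k + 1)) := (summable_nat_add_iff 1).2 hsum
  have hT0 : 0 ≤ ∑' k, p (k + 1) * rr ν (k + 1) :=
    tsum_nonneg fun k => mul_nonneg (hnn _) (rr_nonneg ν _)
  have hT1 : ∑' k, p (k + 1) * rr ν (k + 1) ≤ 1 := by
    have h1 : ∑' k, p (k + 1) * rr ν (k + 1) ≤ ∑' k, p (k + 1) :=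
      Summable.tsum_le_tsum (fun k => mul_le_of_le_one_right (hnn _) (rr_le_one hν _)) hS3 hs1
    have htot' : ∑' k, p (k + 1) = 1 := by
      have h := Summable.tsum_eq_zero_add hsum
      rw [htot, hp0] at h
      linarith
    linarith
  intro m
  match m with
  | 0 =>
    rw [show coef ν p 0 = p 1 - 1 + ∑' k, p (k + 1) * rr ν (k + 1) from rfl, abs_le]
    constructor <;> [linarith [hnn 1]; linarith [hple 1]]
  | (m + 1) =>
    rw [show coef ν p (m + 1) = p (m + 2) - p (m + 1) * rr ν (m + 1) from rfl, abs_le]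
    have h1 : 0 ≤ p (m + 1) * rr ν (m + 1) := mul_nonneg (hnn _) (rr_nonneg ν _)
    have h2 : p (m + 1) * rr ν (m + 1) ≤ 1 :=
      mul_le_one₀ (hple _) (rr_nonneg ν _) (rr_le_one hν _)
    constructor <;> [linarith [hnn (m + 2)]; linarith [hple (m + 2)]]

end core

section char

variable {ν : ℝ} {p : ℕ → ℝ}

lemma coef_zero_of_dp (hν : 1 < ν)
    (hpd : ∀ k : ℕ, p (k + 1) = ((k : ℝ) + 1) ^ (-ν) / zetaR ν) :
    ∀ m, coef ν p m = 0 := by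
  have hζ := zetaR_pos hν
  have hζ' : zetaR ν ≠ 0 := ne_of_gt hζ
  intro m
  match m with
  | (m + 1) =>
    rw [show coef ν p (m + 1) = p (m + 2) - p (m + 1) * rr ν (m + 1) from rfl,
      hpd (m + 1), hpd m]
    have hk := rr_key (ν := ν) m
    have h2 : ((m : ℝ) + 1 + 1) = ((m : ℝ) + 2) := by ring
    push_cast
    rw [h2]
    field_simp
    linarith [hk]
  | 0 =>
    rw [show coef ν p 0 = p 1 - 1 + ∑' k, p (k + 1) * rr ν (k + 1) from rfl]
    have hT : ∑' k, p (k + 1) * rr ν (k + 1) = (zetaR ν - 1) * (zetaR ν)⁻¹ := by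
      have h1 : ∀ k : ℕ, p (k + 1) * rr ν (k + 1) = ((k : ℝ) + 2) ^ (-ν) * (zetaR ν)⁻¹ :=
        fun k => by
          rw [hpd k, ← rr_key (ν := ν) k]
          field_simp
      rw [tsum_congr h1, tsum_mul_right]
      congr 1
      have := zetaR_split hν
      linarith [this]
    rw [hT, hpd 0]
    field_simp
    simp only [Nat.cast_zero, zero_add, Real.one_rpow, mul_zero]
    ring

lemma dp_of_coef_zero (hν : 1 < ν) (hc : ∀ m, coef ν p m = 0) :
    ∀ k : ℕ, p (k + 1) = ((k : ℝ) + 1) ^ (-ν) / zetaR ν := by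
  have hζ := zetaR_pos hν
  have hζ' : zetaR ν ≠ 0 := ne_of_gt hζ
  have hrec : ∀ m : ℕ, p (m + 2) = p (m + 1) * rr ν (m + 1) := fun m => by
    have h := hc (m + 1)
    rw [show coef ν p (m + 1) = p (m + 2) - p (m + 1) * rr ν (m + 1) from rfl] at h
    linarith
  have hind : ∀ k : ℕ, p (k + 1) = p 1 * ((k : ℝ) + 1) ^ (-ν) := by
    intro k
    induction k with
    | zero => norm_num [Real.one_rpow]
    | succ k ih =>
      rw [show k + 1 + 1 = k + 2 from rfl, hrec k, ih, mul_assoc, rr_key]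
      push_cast
      ring_nf
  have hT : ∑' k, p (k + 1) * rr ν (k + 1) = p 1 * (zetaR ν - 1) := by
    have h1 : ∀ k : ℕ, p (k + 1) * rr ν (k + 1) = p 1 * ((k : ℝ) + 2) ^ (-ν) :=
      fun k => by rw [hind k, mul_assoc, rr_key]
    rw [tsum_congr h1, tsum_mul_left]
    congr 1
    have := zetaR_split hν
    linarith [this]
  have hp1 : p 1 * zetaR ν = 1 := by
    have h := hc 0
    rw [show coef ν p 0 = p 1 - 1 + ∑' k, p (k + 1) * rr ν (k + 1) from rfl, hT] at h
    ring_nf at h ⊢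
    linarith
  intro k
  rw [hind k, eq_div_iff hζ']
  calc p 1 * ((k : ℝ) + 1) ^ (-ν) * zetaR ν
      = ((k : ℝ) + 1) ^ (-ν) * (p 1 * zetaR ν) := by ring
    _ = ((k : ℝ) + 1) ^ (-ν) := by rw [hp1, mul_one]

end char

lemma dpPMF_nonneg {ν : ℝ} (hν : 1 < ν) (k : ℕ) : 0 ≤ dpPMF ν k :=
  div_nonneg (Real.rpow_nonneg (by positivity) _) (zetaR_pos hν).le

lemma dpPMF_succ (ν : ℝ) (k : ℕ) : dpPMF ν (k + 1) = ((k : ℝ) + 1) ^ (-ν) / zetaR ν := by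
  rw [dpPMF]
  norm_num

theorem dpareto_stein_characterization
    {Ω : Type*} [MeasurableSpace Ω] (P : Measure Ω) [IsProbabilityMeasure P]
    (X : Ω → ℕ) (hXm : Measurable X) (hX1 : ∀ ω, 1 ≤ X ω)
    (ν : ℝ) (hν : 1 < ν) :
    IsDPareto P X ν ↔
      ∀ s ∈ Set.Ioo (0:ℝ) 1,
        (∫ ω, (s ^ (X ω - 1) - 1 +
          ((X ω : ℝ) / ((X ω : ℝ) + 1)) ^ ν * (1 - s ^ (X ω))) ∂P) = 0 := by
  set μ : Measure ℕ := P.map X with hμdef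
  have hprob : IsProbabilityMeasure μ := Measure.isProbabilityMeasure_map hXm.aemeasurable
  set p : ℕ → ℝ := fun k => (μ {k}).toReal with hpdef
  have hμk : ∀ k : ℕ, μ {k} = P (X ⁻¹' {k}) := fun k =>
    Measure.map_apply hXm (measurableSet_singleton k)
  have hp0 : p 0 = 0 := by
    have he : X ⁻¹' {0} = ∅ := Set.eq_empty_iff_forall_notMem.2 fun ω h => by
      have h1 := hX1 ω
      simp only [Set.mem_preimage, Set.mem_singleton_iff] at h
      omega
    simp [hpdef, hμk 0, he]
  have hnn : ∀ k, 0 ≤ p k := fun k => ENNReal.toReal_nonneg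
  have huniv : ∑' k : ℕ, μ {k} = 1 := by
    have h1 : μ (⋃ k : ℕ, {k}) = ∑' k : ℕ, μ {k} :=
      measure_iUnion (fun i j hij => by simpa using hij) (fun k => measurableSet_singleton k)
    rw [Set.iUnion_of_singleton] at h1
    rw [← h1, measure_univ]
  have hsum : Summable p :=
    ENNReal.summable_toReal (by rw [huniv]; exact ENNReal.one_ne_top)
  have htot : ∑' k, p k = 1 := by
    simp only [hpdef]
    rw [← ENNReal.tsum_toReal_eq (fun k => measure_ne_top μ _), huniv, ENNReal.toReal_one]
  have hbridge : ∀ s ∈ Set.Ioo (0:ℝ) 1,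
      (∫ ω, (s ^ (X ω - 1) - 1 +
        ((X ω : ℝ) / ((X ω : ℝ) + 1)) ^ ν * (1 - s ^ (X ω))) ∂P) = ∑' k, p k * g ν k s := by
    intro s hs
    have hint : Integrable (fun k : ℕ => g ν k s) μ := by
      refine (integrable_const (2:ℝ)).mono' measurable_from_nat.aestronglyMeasurable ?_
      exact Eventually.of_forall fun k => by
        simpa [Real.norm_eq_abs] using g_bound hν hs k
    have h1 : (∫ ω, g ν (X ω) s ∂P) = ∫ k, g ν k s ∂μ :=
      (integral_map hXm.aemeasurable hint.aestronglyMeasurable).symm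
    have h2 : (∫ k, g ν k s ∂μ) = ∑' k, (μ {k}).toReal • g ν k s := integral_countable' hint
    calc (∫ ω, (s ^ (X ω - 1) - 1 +
          ((X ω : ℝ) / ((X ω : ℝ) + 1)) ^ ν * (1 - s ^ (X ω))) ∂P)
        = ∫ ω, g ν (X ω) s ∂P := rfl
      _ = ∑' k, p k * g ν k s := by
          rw [h1, h2]
          exact tsum_congr fun k => smul_eq_mul _ _
  constructor
  · intro hDP s hs
    have hpd : ∀ k : ℕ, p (k + 1) = ((k : ℝ) + 1) ^ (-ν) / zetaR ν := by
      intro k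
      have h := hDP (k + 1) (by omega)
      have : p (k + 1) = (P (X ⁻¹' {k + 1})).toReal := by rw [hpdef]; simp [hμk]
      rw [this, h, ENNReal.toReal_ofReal (dpPMF_nonneg hν _), dpPMF_succ]
    rw [hbridge s hs, rearrange hν hp0 hnn hsum htot hs]
    have hc := coef_zero_of_dp hν hpd
    simp only [hc, zero_mul]
    exact tsum_zero
  · intro h k hk
    have hc : ∀ m, coef ν p m = 0 :=
      coeff_eq_zero (coef_bound hν hp0 hnn hsum htot) (fun s hs => by
        rw [← rearrange hν hp0 hnn hsum htot hs, ← hbridge s hs]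
        exact h s hs)
    have hpd := dp_of_coef_zero hν hc
    obtain ⟨j, rfl⟩ : ∃ j, k = j + 1 := ⟨k - 1, by omega⟩
    have heq : P (X ⁻¹' {j + 1}) = ENNReal.ofReal (p (j + 1)) := by
      rw [← hμk, hpdef, ENNReal.ofReal_toReal (measure_ne_top μ _)]
    rw [heq, hpd j, dpPMF_succ]
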